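/- arXiv:math/9605221 — 2 statements merged into one kernel-verified Lean document; each statement's English description precedes it below -/
import Mathlib

section
/- Let d_1 ≤ d_2 ≤ … ≤ d_m be real numbers with m ≥ 2, d_1 ≥ 1, and d_{i+1} − d_i ≤ 1 for every 1 ≤ i ≤ m−1. Call a canonical interval I_{jkl} empty if no d_i belongs to I_{jkl}. Then ∑_{i=1}^{m−1} (d_{i+1} − d_i)² ≤ 16 · ∑ |I_{jkl}|², where the (possibly infinite) sum on the right is taken over all empty canonical intervals I_{jkl} with j ≥ 1, k ≥ 0, 1 ≤ l ≤ 2^k. -/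
/-!
A gap `(dᵢ, dᵢ₊₁)` of length `0 < g ≤ 1` contains a dyadic interval `[n/2ᵏ, (n+1)/2ᵏ)` with
`2·2⁻ᵏ < g ≤ 4·2⁻ᵏ`; since `dᵢ ≥ 1` it is a canonical interval with `j ≥ 1`, it contains no `dₗ`,
and `g² ≤ 16·(2⁻ᵏ)²`. Distinct gaps are disjoint, so distinct gaps get distinct intervals, and the
sum over the gaps is dominated by the sum over all empty canonical intervals.
-/

open scoped BigOperators ENNReal

/-- The canonical interval `I_{jkl} = [j + (l-1)·2⁻ᵏ, j + l·2⁻ᵏ)`, obtained by dividing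
`[j, j+1)` into `2ᵏ` equal parts. -/
def canonicalInterval (j k l : ℕ) : Set ℝ :=
  Set.Ico ((j : ℝ) + ((l : ℝ) - 1) * ((2 : ℝ) ^ k)⁻¹) ((j : ℝ) + (l : ℝ) * ((2 : ℝ) ^ k)⁻¹)

lemma canonicalInterval_nonempty (j k l : ℕ) : (canonicalInterval j k l).Nonempty :=
  Set.nonempty_Ico.2 (by gcongr; linarith)

lemma canonicalInterval_div_mod (n k : ℕ) :
    canonicalInterval (n / 2 ^ k) k (n % 2 ^ k + 1) =
      Set.Ico (n / 2 ^ k : ℝ) ((n + 1) / 2 ^ k) := by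
  have hn : ((n / 2 ^ k : ℕ) : ℝ) * 2 ^ k + (n % 2 ^ k : ℕ) = n := by
    exact_mod_cast Nat.div_add_mod' n (2 ^ k)
  rw [canonicalInterval, ← hn]
  congr 1 <;> field_simp <;> push_cast <;> ring

lemma exists_two_lt_mul_two_pow_le_four {g : ℝ} (hg0 : 0 < g) (hg2 : g ≤ 2) :
    ∃ k : ℕ, 2 < g * 2 ^ k ∧ g * 2 ^ k ≤ 4 := by
  obtain ⟨n, hle, hlt⟩ := exists_nat_pow_near (x := 2 / g) (by rwa [le_div_iff₀ hg0, one_mul])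
    one_lt_two
  rw [le_div_iff₀ hg0] at hle
  rw [div_lt_iff₀ hg0] at hlt
  exact ⟨n + 1, by linarith, by rw [pow_succ]; linarith⟩

lemma exists_dyadic_Ico_subset_Ioo {a b : ℝ} (ha : 0 ≤ a) (k : ℕ) (hab : 2 / 2 ^ k < b - a) :
    ∃ n : ℕ, a * 2 ^ k < n ∧ Set.Ico (n / 2 ^ k : ℝ) ((n + 1) / 2 ^ k) ⊆ Set.Ioo a b := by
  have h2k : (0 : ℝ) < 2 ^ k := by positivity
  refine ⟨⌊a * 2 ^ k⌋₊ + 1, by exact_mod_cast Nat.lt_floor_add_one _, ?_⟩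
  have hfloor := Nat.floor_le (mul_nonneg ha h2k.le)
  have hlt := Nat.lt_floor_add_one (a * 2 ^ k)
  rw [div_lt_iff₀ h2k] at hab
  rintro x ⟨hx₁, hx₂⟩
  rw [div_le_iff₀ h2k] at hx₁
  rw [lt_div_iff₀ h2k] at hx₂
  push_cast at hx₁ hx₂
  constructor <;> nlinarith

lemma exists_canonicalInterval_subset_Ioo {a b : ℝ} (ha : 1 ≤ a) (hab : a < b) (hba : b - a ≤ 2) :
    ∃ t : ℕ × ℕ × ℕ, 1 ≤ t.1 ∧ 1 ≤ t.2.2 ∧ t.2.2 ≤ 2 ^ t.2.1 ∧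
      canonicalInterval t.1 t.2.1 t.2.2 ⊆ Set.Ioo a b ∧
      (b - a) ^ 2 ≤ 16 * ((2 : ℝ) ^ t.2.1)⁻¹ ^ 2 := by
  obtain ⟨k, hk2, hk4⟩ := exists_two_lt_mul_two_pow_le_four (sub_pos.2 hab) hba
  have h2k : (0 : ℝ) < 2 ^ k := by positivity
  obtain ⟨n, hn, hsub⟩ := exists_dyadic_Ico_subset_Ioo (zero_le_one.trans ha) k
    (by rwa [div_lt_iff₀ h2k])
  have hkn : 2 ^ k ≤ n := by exact_mod_cast (le_mul_of_one_le_left h2k.le ha).trans hn.le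
  refine ⟨(n / 2 ^ k, k, n % 2 ^ k + 1), ?_, le_add_self, Nat.mod_lt _ (by positivity), ?_, ?_⟩
  · exact (Nat.one_le_div_iff (by positivity)).2 hkn
  · rwa [canonicalInterval_div_mod]
  · have hba4 : b - a ≤ 4 * ((2 : ℝ) ^ k)⁻¹ := by
      rwa [← div_eq_mul_inv, le_div_iff₀ h2k]
    calc (b - a) ^ 2 ≤ (4 * ((2 : ℝ) ^ k)⁻¹) ^ 2 := by gcongr
      _ = 16 * ((2 : ℝ) ^ k)⁻¹ ^ 2 := by ring

lemma ENNReal.sum_comp_le_tsum_subtype_of_injOn {ι κ : Type*} {s : Finset ι} {t : ι → κ}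
    {P : κ → Prop} (hP : ∀ i ∈ s, P (t i)) (ht : Set.InjOn t s) (w : κ → ℝ≥0∞) :
    ∑ i ∈ s, w (t i) ≤ ∑' k : {k // P k}, w k := by
  rw [← Finset.tsum_subtype]
  exact ENNReal.tsum_comp_le_tsum_of_injective (f := fun i : s => (⟨t i, hP i i.2⟩ : {k // P k}))
    (fun i j h => Subtype.ext (ht i.2 j.2 (congrArg Subtype.val h))) (w ·)

section MonotoneOnIio

variable {α : Type*} [Preorder α] {d : ℕ → α} {m : ℕ}

lemma MonotoneOn.notMem_Ioo_succ (hd : MonotoneOn d (Set.Iio m)) {i k : ℕ} (hi : i + 1 < m)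
    (hk : k < m) : d k ∉ Set.Ioo (d i) (d (i + 1)) := by
  rintro ⟨hik, hki⟩
  rcases le_or_gt k i with h | h
  · exact (hd hk (by simp; omega) h).not_gt hik
  · exact (hd hi hk h).not_gt hki

lemma MonotoneOn.eq_of_mem_Ioo_succ (hd : MonotoneOn d (Set.Iio m)) {i j : ℕ} {x : α}
    (hi : i + 1 < m) (hj : j + 1 < m) (hxi : x ∈ Set.Ioo (d i) (d (i + 1)))
    (hxj : x ∈ Set.Ioo (d j) (d (j + 1))) : i = j := by
  by_contra hne
  rcases lt_or_gt_of_ne hne with h | h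
  · exact (hxi.2.trans_le (hd (by simp; omega) (by simp; omega) h)).not_gt hxj.1
  · exact (hxj.2.trans_le (hd (by simp; omega) (by simp; omega) h)).not_gt hxi.1

end MonotoneOnIio

section Gaps

variable {d : ℕ → ℝ} {m : ℕ}

lemma ofReal_sum_sq_gaps_eq_sum_filter_lt (hmono : ∀ i, i + 1 < m → d i ≤ d (i + 1)) :
    ENNReal.ofReal (∑ i ∈ Finset.range (m - 1), (d (i + 1) - d i) ^ 2) =
      ∑ i ∈ Finset.range (m - 1) with d i < d (i + 1), ENNReal.ofReal ((d (i + 1) - d i) ^ 2) := by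
  rw [ENNReal.ofReal_sum_of_nonneg fun _ _ => sq_nonneg _]
  refine (Finset.sum_filter_of_ne fun i hi hne => (hmono i ?_).lt_of_ne fun heq => ?_).symm
  · simp only [Finset.mem_range] at hi; omega
  · simp [heq] at hne

lemma exists_empty_canonicalInterval_subset_Ioo_succ (hd : MonotoneOn d (Set.Iio m))
    (hfirst : 1 ≤ d 0) {i : ℕ} (hi : i + 1 < m) (hlt : d i < d (i + 1))
    (hgap : d (i + 1) - d i ≤ 2) :
    ∃ t : ℕ × ℕ × ℕ, (1 ≤ t.1 ∧ 1 ≤ t.2.2 ∧ t.2.2 ≤ 2 ^ t.2.1 ∧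
        ∀ k < m, d k ∉ canonicalInterval t.1 t.2.1 t.2.2) ∧
      canonicalInterval t.1 t.2.1 t.2.2 ⊆ Set.Ioo (d i) (d (i + 1)) ∧
      ENNReal.ofReal ((d (i + 1) - d i) ^ 2) ≤ 16 * ENNReal.ofReal ((2 : ℝ) ^ t.2.1)⁻¹ ^ 2 := by
  obtain ⟨t, hj, hl, hlk, hsub, hsq⟩ := exists_canonicalInterval_subset_Ioo
    (hfirst.trans (hd (by simp; omega) (by simp; omega) i.zero_le)) hlt hgap
  refine ⟨t, ⟨hj, hl, hlk, fun k hk hmem => hd.notMem_Ioo_succ hi hk (hsub hmem)⟩, hsub, ?_⟩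
  rw [← ENNReal.ofReal_pow (by positivity), ← ENNReal.ofReal_ofNat,
    ← ENNReal.ofReal_mul (by norm_num)]
  exact ENNReal.ofReal_le_ofReal hsq

end Gaps

theorem sum_sq_gaps_le_sum_sq_empty_canonical_general
    (m : ℕ) (d : ℕ → ℝ)
    (hmono : ∀ i, i + 1 < m → d i ≤ d (i + 1))
    (hfirst : 1 ≤ d 0)
    (hgap : ∀ i, i + 1 < m → d (i + 1) - d i ≤ 1) :
    ENNReal.ofReal (∑ i ∈ Finset.range (m - 1), (d (i + 1) - d i) ^ 2) ≤
      16 * ∑' t : {t : ℕ × ℕ × ℕ //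
          1 ≤ t.1 ∧ 1 ≤ t.2.2 ∧ t.2.2 ≤ 2 ^ t.2.1 ∧
          ∀ i < m, d i ∉ canonicalInterval t.1 t.2.1 t.2.2},
        (ENNReal.ofReal (((2 : ℝ) ^ t.1.2.1)⁻¹)) ^ 2 := by
  have hd : MonotoneOn d (Set.Iio m) :=
    monotoneOn_of_le_add_one Set.ordConnected_Iio fun i _ _ hi => hmono i hi
  set S := (Finset.range (m - 1)).filter fun i => d i < d (i + 1)
  have hS : ∀ i ∈ S, i + 1 < m ∧ d i < d (i + 1) := fun i hi => by
    simp only [S, Finset.mem_filter, Finset.mem_range] at hi; exact ⟨by omega, hi.2⟩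
  choose! t ht using fun i (hi : i ∈ S) => exists_empty_canonicalInterval_subset_Ioo_succ hd
    hfirst (hS i hi).1 (hS i hi).2 ((hgap i (hS i hi).1).trans one_le_two)
  have hinj : Set.InjOn t S := fun i hi j hj hij => by
    obtain ⟨z, hz⟩ := canonicalInterval_nonempty (t i).1 (t i).2.1 (t i).2.2
    exact hd.eq_of_mem_Ioo_succ (hS i hi).1 (hS j hj).1 ((ht i hi).2.1 hz)
      ((ht j hj).2.1 (hij ▸ hz))
  calc _ = ∑ i ∈ S, ENNReal.ofReal ((d (i + 1) - d i) ^ 2) :=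
        ofReal_sum_sq_gaps_eq_sum_filter_lt hmono
    _ ≤ 16 * ∑ i ∈ S, ENNReal.ofReal ((2 : ℝ) ^ (t i).2.1)⁻¹ ^ 2 := by
        rw [Finset.mul_sum]
        exact Finset.sum_le_sum fun i hi => (ht i hi).2.2
    _ ≤ _ := by
        gcongr
        exact ENNReal.sum_comp_le_tsum_subtype_of_injOn (fun i hi => (ht i hi).1) hinj
          fun t => ENNReal.ofReal ((2 : ℝ) ^ t.2.1)⁻¹ ^ 2

/-- If `d 0 ≤ … ≤ d (m-1)` is a nondecreasing sequence of `m ≥ 2` reals with `d 0 ≥ 1`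
and all consecutive gaps at most `1`, then the sum of the squares of the gaps is at most
`16` times the sum of `|I_{jkl}|²` over all canonical intervals (with `j ≥ 1`, `k ≥ 0`,
`1 ≤ l ≤ 2ᵏ`) containing none of the `d i`; the latter sum is taken in `[0, ∞]`. -/
theorem sum_sq_gaps_le_sum_sq_empty_canonical
    (m : ℕ) (hm : 2 ≤ m) (d : ℕ → ℝ)
    (hmono : ∀ i, i + 1 < m → d i ≤ d (i + 1))
    (hfirst : 1 ≤ d 0)
    (hgap : ∀ i, i + 1 < m → d (i + 1) - d i ≤ 1) :
    ENNReal.ofReal (∑ i ∈ Finset.range (m - 1), (d (i + 1) - d i) ^ 2) ≤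
      16 * ∑' t : {t : ℕ × ℕ × ℕ //
          1 ≤ t.1 ∧ 1 ≤ t.2.2 ∧ t.2.2 ≤ 2 ^ t.2.1 ∧
          ∀ i < m, d i ∉ canonicalInterval t.1 t.2.1 t.2.2},
        (ENNReal.ofReal (((2 : ℝ) ^ t.1.2.1)⁻¹)) ^ 2 :=
  sum_sq_gaps_le_sum_sq_empty_canonical_general m d hmono hfirst hgap
end

section
/- There exist constants c > 0, C > 0 and an integer n₀ such that for every n ≥ n₀, every real a with 1 ≤ a ≤ 1.96·n^{4/7}, and every real δ with 0 < δ ≤ 1/min(a, n^{3/7}), the 4-dimensional Lebesgue measure of the set {(x, y) ∈ X₁ × X₁ : a ≤ ‖x − y‖ ≤ a + δ} lies between c · n · min(a, n^{3/7}) · δ and C · n · min(a, n^{3/7}) · δ, where X₁ = [−n^{3/7}, n^{3/7}] × [−0.99·n^{4/7}, 0.99·n^{4/7}] ⊆ ℝ². -/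
/-!
Write a pair as `(z, z + d)`. The shear `(z, w) ↦ (z, w - z)` preserves Lebesgue measure, so the
set of pairs is squeezed between products `|B| · |C|`: above by `X₁` times the part of the annulus
`a ≤ ‖d‖ ≤ a + δ` in the strip `|Re d| ≤ 2 n^{3/7}`, below by a box of area `≍ n` at the bottom of
`X₁` times the part of the upper half-annulus over `0 ≤ Re d ≤ min(a, n^{3/7})`. Over an abscissa
`u` with `|u| ≤ a / 2` the annulus has vertical slices of length `≍ δ` (Fubini), which bounds the
strip by `≲ n^{3/7} δ` when `a ≥ 4 n^{3/7}`, and the half-annulus piece from below by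
`≳ min(a, n^{3/7}) δ`; for smaller `a` the whole annulus has area `≲ a δ`.
-/

open MeasureTheory

/-- The rectangle `X₁ = {(x,y) : |x| ≤ n^{3/7}, |y| ≤ 0.99·n^{4/7}}`, with the plane
modeled by `ℂ`. -/
noncomputable def X1 (n : ℕ) : Set ℂ :=
  {z : ℂ | |z.re| ≤ (n : ℝ) ^ ((3 : ℝ) / 7) ∧ |z.im| ≤ 0.99 * (n : ℝ) ^ ((4 : ℝ) / 7)}

open Set Real Pointwise ENNReal

section Shear

variable {G : Type*} [MeasurableSpace G] [AddGroup G] [MeasurableAdd₂ G] [MeasurableNeg G]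
  (μ : Measure G) [SFinite μ] [μ.IsAddRightInvariant]

theorem measure_prod_fst_mem_sub_mem (A B : Set G) :
    μ.prod μ {p : G × G | p.1 ∈ A ∧ p.2 - p.1 ∈ B} = μ A * μ B := by
  have h : MeasurePreserving (MeasurableEquiv.shearSubRight G) (μ.prod μ) (μ.prod μ) :=
    measurePreserving_prod_sub μ μ
  rw [← Measure.prod_prod]
  exact h.measure_preimage_equiv (A ×ˢ B)

end Shear

section Pairs

variable {E : Type*} [NormedAddCommGroup E] [MeasurableSpace E] [MeasurableAdd₂ E]
  [MeasurableNeg E] (μ : Measure E) [SFinite μ] [μ.IsAddRightInvariant]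

theorem measure_prod_dist_mem_le (A : Set E) (S : Set ℝ) :
    μ.prod μ {p : E × E | p.1 ∈ A ∧ p.2 ∈ A ∧ dist p.1 p.2 ∈ S} ≤
      μ A * μ {d | d ∈ A - A ∧ ‖d‖ ∈ S} := by
  rw [← measure_prod_fst_mem_sub_mem]
  refine measure_mono ?_
  rintro ⟨z, w⟩ ⟨hz, hw, hzw⟩
  exact ⟨hz, sub_mem_sub hw hz, by rwa [← dist_eq_norm, dist_comm]⟩

theorem mul_measure_le_measure_prod_dist_mem {A B C : Set E} {S : Set ℝ} (hBA : B ⊆ A)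
    (hBCA : B + C ⊆ A) (hCS : ∀ d ∈ C, ‖d‖ ∈ S) :
    μ B * μ C ≤ μ.prod μ {p : E × E | p.1 ∈ A ∧ p.2 ∈ A ∧ dist p.1 p.2 ∈ S} := by
  rw [← measure_prod_fst_mem_sub_mem]
  refine measure_mono ?_
  rintro ⟨z, w⟩ ⟨hz, hd⟩
  refine ⟨hBA hz, ?_, ?_⟩
  · simpa using hBCA (add_mem_add hz hd)
  · rw [dist_comm, dist_eq_norm]
    exact hCS _ hd

end Pairs

theorem Real.volume_setOf_abs_mem_Icc_le (r s : ℝ) :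
    volume {v : ℝ | |v| ∈ Icc r s} ≤ 2 * ENNReal.ofReal (s - r) := by
  have hsub : {v : ℝ | |v| ∈ Icc r s} ⊆ Icc r s ∪ Icc (-s) (-r) := by
    rintro v ⟨h1, h2⟩
    rcases abs_cases v with ⟨hv, -⟩ | ⟨hv, -⟩
    · exact Or.inl ⟨by linarith, by linarith⟩
    · exact Or.inr ⟨by linarith, by linarith⟩
  calc volume {v : ℝ | |v| ∈ Icc r s} ≤ volume (Icc r s) + volume (Icc (-s) (-r)) :=
        (measure_mono hsub).trans (measure_union_le _ _)
    _ = 2 * ENNReal.ofReal (s - r) := by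
        rw [Real.volume_Icc, Real.volume_Icc, neg_sub_neg, two_mul]

namespace Complex

theorem volume_setOf_re_mem_im_mem (s t : Set ℝ) :
    volume {z : ℂ | z.re ∈ s ∧ z.im ∈ t} = volume s * volume t := by
  rw [← Measure.prod_prod, ← Measure.volume_eq_prod]
  exact volume_preserving_equiv_real_prod.measure_preimage_equiv (s ×ˢ t)

theorem volume_eq_lintegral_volume_slice {s : Set ℂ} (hs : MeasurableSet s) :
    volume s = ∫⁻ x : ℝ, volume {y : ℝ | (⟨x, y⟩ : ℂ) ∈ s} := by
  rw [← (volume_preserving_equiv_real_prod.symm _).measure_preimage_equiv s,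
    Measure.volume_eq_prod, Measure.prod_apply (hs.preimage measurableEquivRealProd.symm.measurable)]
  rfl

theorem norm_mk_mem_Icc_iff {a b u v : ℝ} (hu : |u| ≤ a) (hab : a ≤ b) :
    ‖(⟨u, v⟩ : ℂ)‖ ∈ Icc a b ↔ |v| ∈ Icc √(a ^ 2 - u ^ 2) √(b ^ 2 - u ^ 2) := by
  have ha : 0 ≤ a := (abs_nonneg u).trans hu
  have hu2 : u ^ 2 ≤ a ^ 2 := sq_le_sq' (abs_le.mp hu).1 (abs_le.mp hu).2
  have hab2 : a ^ 2 ≤ b ^ 2 := pow_le_pow_left₀ ha hab 2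
  have hnorm : ‖(⟨u, v⟩ : ℂ)‖ = √(u ^ 2 + v ^ 2) := by
    rw [norm_def, normSq_mk]; ring_nf
  rw [hnorm, ← Real.sqrt_sq_eq_abs, mem_Icc, mem_Icc, Real.le_sqrt ha (by positivity),
    Real.sqrt_le_left (ha.trans hab), Real.sqrt_le_sqrt_iff (sq_nonneg v),
    Real.sqrt_le_sqrt_iff (by linarith)]
  constructor <;> rintro ⟨h1, h2⟩ <;> constructor <;> linarith

theorem volume_annulus_le {a δ : ℝ} (ha : 0 ≤ a) (hδ : 0 ≤ δ) :
    volume {d : ℂ | ‖d‖ ∈ Icc a (a + δ)} ≤ ENNReal.ofReal (π * δ * (2 * a + δ)) := by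
  have hsub : {d : ℂ | ‖d‖ ∈ Icc a (a + δ)} ⊆ Metric.closedBall 0 (a + δ) \ Metric.ball 0 a :=
    fun d ⟨h1, h2⟩ => ⟨by simpa using h2, by simpa using h1⟩
  have hball : ∀ r, 0 ≤ r → volume (Metric.ball (0 : ℂ) r) = ENNReal.ofReal (π * r ^ 2) := by
    intro r hr
    rw [volume_ball, ← ENNReal.ofReal_pow hr, mul_comm, ENNReal.ofReal_mul Real.pi_pos.le,
      ← NNReal.coe_real_pi, ofReal_coe_nnreal]
  calc volume {d : ℂ | ‖d‖ ∈ Icc a (a + δ)}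
      ≤ volume (Metric.closedBall (0 : ℂ) (a + δ)) - volume (Metric.ball (0 : ℂ) a) := by
        refine (measure_mono hsub).trans_eq (measure_sdiff ?_ measurableSet_ball.nullMeasurableSet
          measure_ball_lt_top.ne)
        exact Metric.ball_subset_closedBall.trans (Metric.closedBall_subset_closedBall (by linarith))
    _ = ENNReal.ofReal (π * δ * (2 * a + δ)) := by
        rw [Measure.addHaar_closedBall_eq_addHaar_ball, hball _ (by positivity), hball _ ha,
          ← ENNReal.ofReal_sub _ (by positivity)]
        ring_nf

theorem volume_slice_annulus_le {a δ u : ℝ} (hδ : 0 ≤ δ) (hu : 2 * |u| ≤ a) :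
    volume {v : ℝ | ‖(⟨u, v⟩ : ℂ)‖ ∈ Icc a (a + δ)} ≤ ENNReal.ofReal (4 * δ) := by
  have hua : |u| ≤ a := by linarith [abs_nonneg u]
  have hu2 : 4 * u ^ 2 ≤ a ^ 2 := by nlinarith [sq_abs u, abs_nonneg u]
  set f := √(a ^ 2 - u ^ 2)
  have hf2 : f ^ 2 = a ^ 2 - u ^ 2 := Real.sq_sqrt (by nlinarith)
  have hf : a / 2 ≤ f := Real.le_sqrt_of_sq_le (by nlinarith)
  -- the slice is two intervals, each shorter than `2 δ` because the inner arc stays above `a / 2`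
  have hgf : √((a + δ) ^ 2 - u ^ 2) ≤ f + 2 * δ :=
    Real.sqrt_le_iff.mpr ⟨by linarith [Real.sqrt_nonneg (a ^ 2 - u ^ 2)], by nlinarith⟩
  simp_rw [norm_mk_mem_Icc_iff hua (le_add_of_nonneg_right hδ)]
  calc volume {v : ℝ | |v| ∈ Icc f √((a + δ) ^ 2 - u ^ 2)}
      ≤ 2 * ENNReal.ofReal (√((a + δ) ^ 2 - u ^ 2) - f) := Real.volume_setOf_abs_mem_Icc_le _ _
    _ ≤ 2 * ENNReal.ofReal (2 * δ) := by gcongr; linarith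
    _ = ENNReal.ofReal (4 * δ) := by
        rw [← ENNReal.ofReal_ofNat 2, ← ENNReal.ofReal_mul zero_le_two]; ring_nf

theorem le_volume_slice_upper_annulus {a δ u : ℝ} (hδ : 0 ≤ δ) (hu : |u| ≤ a) :
    ENNReal.ofReal (δ / 2) ≤ volume {v : ℝ | 0 ≤ v ∧ ‖(⟨u, v⟩ : ℂ)‖ ∈ Icc a (a + δ)} := by
  set f := √(a ^ 2 - u ^ 2)
  set g := √((a + δ) ^ 2 - u ^ 2)
  have ha : 0 ≤ a := (abs_nonneg u).trans hu
  have hu2 : u ^ 2 ≤ a ^ 2 := sq_le_sq' (abs_le.mp hu).1 (abs_le.mp hu).2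
  have hf2 : f ^ 2 = a ^ 2 - u ^ 2 := Real.sq_sqrt (by linarith)
  have hfa : f ≤ a := Real.sqrt_le_iff.mpr ⟨ha, by linarith [sq_nonneg u]⟩
  have hfg : f + δ / 2 ≤ g :=
    Real.le_sqrt_of_sq_le (by nlinarith [Real.sqrt_nonneg (a ^ 2 - u ^ 2)])
  have hsub : Icc f g ⊆ {v : ℝ | 0 ≤ v ∧ ‖(⟨u, v⟩ : ℂ)‖ ∈ Icc a (a + δ)} := by
    intro v hv
    have hv0 : 0 ≤ v := (Real.sqrt_nonneg _).trans hv.1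
    refine ⟨hv0, (norm_mk_mem_Icc_iff hu (le_add_of_nonneg_right hδ)).mpr ?_⟩
    rwa [abs_of_nonneg hv0]
  calc ENNReal.ofReal (δ / 2) ≤ volume (Icc f g) := by
        rw [Real.volume_Icc]; exact ofReal_le_ofReal (by linarith)
    _ ≤ _ := measure_mono hsub

theorem volume_strip_inter_annulus_le_of_two_mul_le {W a δ : ℝ} (hδ : 0 ≤ δ) (hW : 2 * W ≤ a) :
    volume {d : ℂ | |d.re| ≤ W ∧ ‖d‖ ∈ Icc a (a + δ)} ≤ ENNReal.ofReal (8 * W * δ) := by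
  have hmeas : MeasurableSet {d : ℂ | |d.re| ≤ W ∧ ‖d‖ ∈ Icc a (a + δ)} := by measurability
  rw [volume_eq_lintegral_volume_slice hmeas]
  calc ∫⁻ u : ℝ, volume {v : ℝ | |u| ≤ W ∧ ‖(⟨u, v⟩ : ℂ)‖ ∈ Icc a (a + δ)}
      ≤ ∫⁻ u : ℝ, (Icc (-W) W).indicator (fun _ ↦ ENNReal.ofReal (4 * δ)) u := by
        refine lintegral_mono fun u ↦ ?_
        by_cases hu : |u| ≤ W
        · rw [indicator_of_mem (show u ∈ Icc (-W) W from abs_le.mp hu)]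
          exact (measure_mono fun v hv ↦ hv.2).trans (volume_slice_annulus_le hδ (by linarith))
        · simp [hu]
    _ = ENNReal.ofReal (8 * W * δ) := by
        rw [lintegral_indicator measurableSet_Icc, setLIntegral_const, Real.volume_Icc,
          ← ENNReal.ofReal_mul (by positivity)]
        ring_nf

theorem volume_strip_inter_annulus_le {W a δ : ℝ} (hW : 0 ≤ W) (hδ : 0 ≤ δ) (hδa : δ ≤ a) :
    volume {d : ℂ | |d.re| ≤ W ∧ ‖d‖ ∈ Icc a (a + δ)} ≤ ENNReal.ofReal (24 * min a W * δ) := by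
  rcases le_or_gt a (2 * W) with hnear | hfar
  · have ham : a ≤ 2 * min a W := by
      rcases le_total a W with h | h
      · rw [min_eq_left h]; linarith
      · rw [min_eq_right h]; linarith
    calc volume {d : ℂ | |d.re| ≤ W ∧ ‖d‖ ∈ Icc a (a + δ)}
        ≤ volume {d : ℂ | ‖d‖ ∈ Icc a (a + δ)} := measure_mono fun d hd ↦ hd.2
      _ ≤ ENNReal.ofReal (π * δ * (2 * a + δ)) := volume_annulus_le (hδ.trans hδa) hδ
      _ ≤ ENNReal.ofReal (24 * min a W * δ) := by
          refine ENNReal.ofReal_le_ofReal ?_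
          have hpi := mul_le_mul_of_nonneg_right Real.pi_le_four
            (mul_nonneg hδ (by linarith) : 0 ≤ δ * (2 * a + δ))
          nlinarith [mul_le_mul_of_nonneg_left hδa hδ, mul_le_mul_of_nonneg_left ham hδ]
  · rw [min_eq_right (by linarith : W ≤ a)]
    exact (volume_strip_inter_annulus_le_of_two_mul_le hδ hfar.le).trans
      (ENNReal.ofReal_le_ofReal (by nlinarith))

theorem le_volume_upper_strip_inter_annulus {U a δ : ℝ} (hUa : U ≤ a) (hδ : 0 ≤ δ) :
    ENNReal.ofReal (U * δ / 2) ≤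
      volume {d : ℂ | d.re ∈ Icc 0 U ∧ 0 ≤ d.im ∧ ‖d‖ ∈ Icc a (a + δ)} := by
  have hmeas : MeasurableSet {d : ℂ | d.re ∈ Icc 0 U ∧ 0 ≤ d.im ∧ ‖d‖ ∈ Icc a (a + δ)} := by
    measurability
  rw [volume_eq_lintegral_volume_slice hmeas]
  calc ENNReal.ofReal (U * δ / 2)
      = ∫⁻ u : ℝ, (Icc 0 U).indicator (fun _ ↦ ENNReal.ofReal (δ / 2)) u := by
        rw [lintegral_indicator measurableSet_Icc, setLIntegral_const, Real.volume_Icc,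
          ← ENNReal.ofReal_mul (by positivity)]
        ring_nf
    _ ≤ ∫⁻ u : ℝ, volume {v : ℝ | u ∈ Icc 0 U ∧ 0 ≤ v ∧ ‖(⟨u, v⟩ : ℂ)‖ ∈ Icc a (a + δ)} := by
        refine lintegral_mono fun u ↦ ?_
        by_cases hu : u ∈ Icc 0 U
        · rw [indicator_of_mem hu]
          have hua : |u| ≤ a := by rw [abs_of_nonneg hu.1]; exact hu.2.trans hUa
          exact (le_volume_slice_upper_annulus hδ hua).trans (measure_mono fun v hv ↦ ⟨hu, hv⟩)
        · rw [indicator_of_notMem hu]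
          exact zero_le

end Complex

theorem volume_pairs_rect_dist_mem_Icc_le {T H a δ : ℝ} (hT : 0 ≤ T) (hH : 0 ≤ H) (hδ : 0 ≤ δ)
    (hδa : δ ≤ a) :
    volume {zw : ℂ × ℂ | zw.1 ∈ {z : ℂ | |z.re| ≤ T ∧ |z.im| ≤ H} ∧
        zw.2 ∈ {z : ℂ | |z.re| ≤ T ∧ |z.im| ≤ H} ∧ dist zw.1 zw.2 ∈ Icc a (a + δ)} ≤
      ENNReal.ofReal (192 * T * H * min a T * δ) := by
  set R := {z : ℂ | |z.re| ≤ T ∧ |z.im| ≤ H}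
  have hdiff : R - R ⊆ {d : ℂ | |d.re| ≤ 2 * T} := by
    rintro _ ⟨z, hz, w, hw, rfl⟩
    calc |(z - w).re| ≤ |z.re| + |w.re| := by rw [Complex.sub_re]; exact abs_sub _ _
      _ ≤ 2 * T := by linarith [hz.1, hw.1]
  have hR : volume R = ENNReal.ofReal (2 * T) * ENNReal.ofReal (2 * H) := by
    simp_rw [R, abs_le, ← mem_Icc, Complex.volume_setOf_re_mem_im_mem, Real.volume_Icc]
    ring_nf
  have hmin : min a (2 * T) ≤ 2 * min a T := by
    rw [mul_min_of_nonneg _ _ zero_le_two]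
    exact min_le_min_right _ (by linarith)
  calc volume {zw : ℂ × ℂ | zw.1 ∈ R ∧ zw.2 ∈ R ∧ dist zw.1 zw.2 ∈ Icc a (a + δ)}
      ≤ volume R * volume {d | d ∈ R - R ∧ ‖d‖ ∈ Icc a (a + δ)} := by
        rw [Measure.volume_eq_prod]; exact measure_prod_dist_mem_le volume R _
    _ ≤ volume R * volume {d : ℂ | |d.re| ≤ 2 * T ∧ ‖d‖ ∈ Icc a (a + δ)} := by
        refine mul_le_mul_right (measure_mono ?_) _
        exact fun d hd ↦ ⟨hdiff hd.1, hd.2⟩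
    _ ≤ ENNReal.ofReal (2 * T) * ENNReal.ofReal (2 * H) *
          ENNReal.ofReal (24 * min a (2 * T) * δ) := by
        rw [hR]; gcongr; exact Complex.volume_strip_inter_annulus_le (by positivity) hδ hδa
    _ ≤ ENNReal.ofReal (192 * T * H * min a T * δ) := by
        rw [← ENNReal.ofReal_mul (by positivity), ← ENNReal.ofReal_mul (by positivity)]
        refine ENNReal.ofReal_le_ofReal ?_
        nlinarith [mul_le_mul_of_nonneg_left hmin (by positivity : 0 ≤ 96 * T * H * δ)]

theorem le_volume_pairs_rect_dist_mem_Icc {T H h a δ : ℝ} (hm : 0 ≤ min a T) (hδ : 0 ≤ δ)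
    (hh : 0 ≤ h) (hfit : h + a + δ ≤ 2 * H) :
    ENNReal.ofReal (T * h * (min a T * δ / 2)) ≤
      volume {zw : ℂ × ℂ | zw.1 ∈ {z : ℂ | |z.re| ≤ T ∧ |z.im| ≤ H} ∧
        zw.2 ∈ {z : ℂ | |z.re| ≤ T ∧ |z.im| ≤ H} ∧ dist zw.1 zw.2 ∈ Icc a (a + δ)} := by
  set R := {z : ℂ | |z.re| ≤ T ∧ |z.im| ≤ H}
  set m := min a T
  have hma : m ≤ a := min_le_left a T
  have hmT : m ≤ T := min_le_right a T
  have hT : 0 ≤ T := hm.trans hmT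
  set B := {z : ℂ | z.re ∈ Icc (-T) 0 ∧ z.im ∈ Icc (-H) (-H + h)}
  set C := {d : ℂ | d.re ∈ Icc 0 m ∧ 0 ≤ d.im ∧ ‖d‖ ∈ Icc a (a + δ)}
  have hBR : B ⊆ R := fun z ⟨⟨h1, h2⟩, h3, h4⟩ ↦
    ⟨abs_le.mpr ⟨h1, by linarith⟩, abs_le.mpr ⟨h3, by linarith⟩⟩
  -- `B` is a box at the bottom left of `R`; a vector of `C` moves it by at most `m ≤ T` to the
  -- right and `a + δ ≤ 2 H - h` upwards
  have hBCR : B + C ⊆ R := by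
    rintro _ ⟨z, ⟨⟨hz1, hz2⟩, hz3, hz4⟩, d, ⟨⟨hd1, hd2⟩, hd3, -, hd4⟩, rfl⟩
    have hdim := Complex.im_le_norm d
    refine ⟨abs_le.mpr ⟨?_, ?_⟩, abs_le.mpr ⟨?_, ?_⟩⟩ <;>
      simp only [Complex.add_re, Complex.add_im] <;> linarith
  calc ENNReal.ofReal (T * h * (m * δ / 2)) = volume B * ENNReal.ofReal (m * δ / 2) := by
        rw [Complex.volume_setOf_re_mem_im_mem, Real.volume_Icc, Real.volume_Icc,
          ENNReal.ofReal_mul (mul_nonneg hT hh), ENNReal.ofReal_mul hT]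
        congr 3 <;> ring
    _ ≤ volume B * volume C := by
        gcongr; exact Complex.le_volume_upper_strip_inter_annulus hma hδ
    _ ≤ volume {zw : ℂ × ℂ | zw.1 ∈ R ∧ zw.2 ∈ R ∧ dist zw.1 zw.2 ∈ Icc a (a + δ)} := by
        rw [Measure.volume_eq_prod]
        exact mul_measure_le_measure_prod_dist_mem volume hBR hBCR fun d hd ↦ hd.2.2

/-- For `1 ≤ a ≤ 1.96·n^{4/7}` and `0 < δ ≤ 1/min(a, n^{3/7})`, the 4-dimensional
Lebesgue measure of the pairs `(x, y) ∈ X₁ × X₁` with `a ≤ ‖x - y‖ ≤ a + δ` is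
`Θ(n · min(a, n^{3/7}) · δ)`. -/
theorem measure_annulus_pairs_X1 :
    ∃ c C : ℝ, 0 < c ∧ 0 < C ∧ ∃ n₀ : ℕ, ∀ n : ℕ, n₀ ≤ n →
      ∀ a : ℝ, 1 ≤ a → a ≤ 1.96 * (n : ℝ) ^ ((4 : ℝ) / 7) →
      ∀ δ : ℝ, 0 < δ → δ ≤ 1 / min a ((n : ℝ) ^ ((3 : ℝ) / 7)) →
        ENNReal.ofReal (c * (n : ℝ) * min a ((n : ℝ) ^ ((3 : ℝ) / 7)) * δ) ≤
          volume {zw : ℂ × ℂ | zw.1 ∈ X1 n ∧ zw.2 ∈ X1 n ∧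
            a ≤ dist zw.1 zw.2 ∧ dist zw.1 zw.2 ≤ a + δ} ∧
        volume {zw : ℂ × ℂ | zw.1 ∈ X1 n ∧ zw.2 ∈ X1 n ∧
            a ≤ dist zw.1 zw.2 ∧ dist zw.1 zw.2 ≤ a + δ} ≤
          ENNReal.ofReal (C * (n : ℝ) * min a ((n : ℝ) ^ ((3 : ℝ) / 7)) * δ) := by
  refine ⟨1 / 200, 200, by norm_num, by norm_num, 10 ^ 4, ?_⟩
  intro n hn a ha1 ha2 δ hδ hδm
  set T := (n : ℝ) ^ ((3 : ℝ) / 7)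
  set F := (n : ℝ) ^ ((4 : ℝ) / 7)
  have hn : (10 ^ 4 : ℝ) ≤ n := by exact_mod_cast hn
  have hTF : T * F = n := by rw [← Real.rpow_add (by positivity)]; norm_num
  have hT : 1 ≤ T := Real.one_le_rpow (by linarith) (by norm_num)
  have hF : 100 ≤ F :=
    calc (100 : ℝ) ≤ √n := Real.le_sqrt_of_sq_le (by linarith)
      _ = (n : ℝ) ^ (1 / 2 : ℝ) := Real.sqrt_eq_rpow _
      _ ≤ F := Real.rpow_le_rpow_of_exponent_le (by linarith) (by norm_num)
  have hm : 1 ≤ min a T := le_min ha1 hT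
  have hδ1 : δ ≤ 1 := hδm.trans ((div_le_one (by linarith)).mpr hm)
  have hnmδ : 0 ≤ n * min a T * δ := by positivity
  constructor
  · calc ENNReal.ofReal (1 / 200 * n * min a T * δ)
        = ENNReal.ofReal (T * (0.01 * F) * (min a T * δ / 2)) := by rw [← hTF]; ring_nf
      _ ≤ _ := le_volume_pairs_rect_dist_mem_Icc (by linarith) hδ.le (by linarith) (by linarith)
  · calc _ ≤ ENNReal.ofReal (192 * T * (0.99 * F) * min a T * δ) :=
          volume_pairs_rect_dist_mem_Icc_le (by linarith) (by linarith) hδ.le (by linarith)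
      _ ≤ _ := ENNReal.ofReal_le_ofReal (by rw [← hTF] at hnmδ ⊢; nlinarith)
end
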